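/- (X-fusion merges nodes) Applying the success branch of an X-fusion (the effect (⟨0|⟨0| + ⟨1|⟨1|)/√2 up to Pauli error) to one leg of each of two Z-spiders merges them: for any m,n ≥ 1 and phases α, β, the linear map obtained by contracting (⟨00| + (−1)^k⟨11|) against one output of the (m+1)-legged Z-spider with phase α and one output of the (n+1)-legged Z-spider with phase β equals, up to scalar and Pauli-Z corrections on the remaining legs when k=1, the (m+n)-legged Z-spider with phase α+β. -/
import Mathlib


open scoped Classical
open Complex

/-- The Z-spider `|0⟩^{⊗(m+1)} + e^{iα}|1⟩^{⊗(m+1)}` with `m` remaining legs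
(configuration `x`) and one distinguished leg (value `a`) to be fused. -/
noncomputable def spiderLeg (m : ℕ) (α : ℝ) (x : Fin m → Fin 2) (a : Fin 2) : ℂ :=
  if (∀ i, x i = 0) ∧ a = 0 then 1
  else if (∀ i, x i = 1) ∧ a = 1 then Complex.exp (Complex.I * α) else 0

/-- X-fusion merges nodes: contracting the success effect
`(⟨0|⊗⟨0| + (−1)^k⟨1|⊗⟨1|)/√2` against one leg of each of two Z-spiders (with
`m+1 ≥ 1` resp. `n+1 ≥ 1` remaining legs and phases `α, β`) yields, up to a
nonzero scalar and a Pauli-Z correction on a remaining leg when `k = 1`, the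
merged Z-spider with phase `α + β`. -/
theorem xFusion_merges (m n : ℕ) (α β : ℝ) (k : Fin 2) :
    ∃ c : ℂ, c ≠ 0 ∧ ∀ (x : Fin (m + 1) → Fin 2) (y : Fin (n + 1) → Fin 2),
      (∑ a : Fin 2, ∑ b : Fin 2,
          ((1 / Real.sqrt 2 : ℝ) : ℂ) *
            (if a = 0 ∧ b = 0 then 1
             else if a = 1 ∧ b = 1 then (-1 : ℂ) ^ (k : ℕ) else 0) *
          spiderLeg (m + 1) α x a * spiderLeg (n + 1) β y b)
        = c * ((-1 : ℂ) ^ ((k : ℕ) * (x 0 : ℕ)) *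
            (if (∀ i, x i = 0) ∧ (∀ j, y j = 0) then 1
             else if (∀ i, x i = 1) ∧ (∀ j, y j = 1) then
               Complex.exp (Complex.I * (α + β)) else 0)) := by
  refine ⟨((1 / Real.sqrt 2 : ℝ) : ℂ), ?_, ?_⟩
  · have : Real.sqrt 2 ≠ 0 := by positivity
    simp [this]
  · intro x y
    have hx : ¬ ((∀ i, x i = 0) ∧ (∀ i, x i = 1)) := by
      rintro ⟨h0, h1⟩
      have := (h0 0).symm.trans (h1 0)
      exact absurd this (by decide)
    have hy : ¬ ((∀ j, y j = 0) ∧ (∀ j, y j = 1)) := by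
      rintro ⟨h0, h1⟩
      have := (h0 0).symm.trans (h1 0)
      exact absurd this (by decide)
    have hexp : Complex.exp (Complex.I * α) * Complex.exp (Complex.I * β)
        = Complex.exp (Complex.I * ↑α + Complex.I * ↑β) := by
      rw [← Complex.exp_add]
    by_cases hx0 : ∀ i, x i = 0 <;> by_cases hx1 : ∀ i, x i = 1 <;>
      by_cases hy0 : ∀ j, y j = 0 <;> by_cases hy1 : ∀ j, y j = 1 <;>
      simp [Fin.sum_univ_two, spiderLeg, hx0, hx1, hy0, hy1, hexp, mul_add] <;> rw [mul_assoc, hexp] <;> ring
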